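/- arXiv:1912.11709 — 5 statements merged into one kernel-verified Lean document; each statement's English description precedes it below -/
import Mathlib

section
/- For every ϱ ∈ (0,1), the quantity 1/(1-ϱ) - 1/(1+ϱ) + 1/(ϱ·ln ϱ) is strictly negative. (This is the sign of the jump of the luminosity radius at the massive point, in units of G·M₀.) -/
theorem smp_jump_rho_negative (ϱ : ℝ) (hϱ : ϱ ∈ Set.Ioo (0:ℝ) 1) :
    1 / (1 - ϱ) - 1 / (1 + ϱ) + 1 / (ϱ * Real.log ϱ) < 0 := by
  obtain ⟨h0, h1⟩ := hϱ
  have hL : Real.log ϱ < 0 := Real.log_neg h0 h1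
  have hx : (0:ℝ) < 1 / ϱ ^ 2 := by positivity
  have hx1 : 1 / ϱ ^ 2 ≠ 1 := by
    intro h
    have : ϱ ^ 2 = 1 := by
      field_simp at h; nlinarith
    nlinarith
  have hlog := Real.log_lt_sub_one_of_pos hx hx1
  have hlogval : Real.log (1 / ϱ ^ 2) = -(2 * Real.log ϱ) := by
    rw [one_div, Real.log_inv, Real.log_pow]
    push_cast; ring
  rw [hlogval] at hlog
  -- key: 2 * ϱ^2 * (-log ϱ) < 1 - ϱ^2
  have hkey : 2 * ϱ ^ 2 * (-Real.log ϱ) < 1 - ϱ ^ 2 := by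
    have hϱ2 : (0:ℝ) < ϱ ^ 2 := by positivity
    have := mul_lt_mul_of_pos_left hlog hϱ2
    rw [mul_sub] at this
    field_simp at this ⊢
    nlinarith
  have h1m : (0:ℝ) < 1 - ϱ := by linarith
  have h1p : (0:ℝ) < 1 + ϱ := by linarith
  have hsub : 1 / (1 - ϱ) - 1 / (1 + ϱ) = 2 * ϱ / (1 - ϱ ^ 2) := by
    rw [div_sub_div _ _ h1m.ne' h1p.ne']
    congr 1 <;> ring
  have hlast : 1 / (ϱ * Real.log ϱ) = -(1 / (ϱ * (-Real.log ϱ))) := by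
    field_simp
  rw [hsub, hlast]
  have hpos : (0:ℝ) < 1 - ϱ ^ 2 := by nlinarith
  have hden : (0:ℝ) < ϱ * (-Real.log ϱ) := by
    apply mul_pos h0; linarith
  have : 2 * ϱ / (1 - ϱ ^ 2) < 1 / (ϱ * (-Real.log ϱ)) := by
    rw [div_lt_div_iff₀ hpos hden]
    nlinarith
  linarith
end

section
/- The equation (1/ϱ - ϱ)/2 = e^{j/2} · ln(1/ϱ) has a solution ϱ ∈ (0,1) whenever j > 0. -/
/-!
Put `u = log (1 / ϱ)`, so that `(1 / ϱ - ϱ) / 2 = sinh u` and the equation becomes `sinh u = c * u`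
with `c = exp (j / 2) > 1`. At `u = log c` we have `sinh u = (c - 1 / c) / 2 < c - 1 ≤ c * u`, while
`exp u ≥ 1 + u + u ^ 2 / 2` makes `sinh u > c * u` at `u = 4 c`; the intermediate value theorem
gives a solution `u > 0` in between, and `ϱ = exp (-u)`.
-/

open Real

lemma sinh_log_lt_mul_log {c : ℝ} (hc : 1 < c) : sinh (log c) < c * log c := by
  have hc0 : 0 < c := by linarith
  have hlog : 1 - c⁻¹ ≤ log c := one_sub_inv_le_log_of_pos hc0
  have hcinv : c⁻¹ * c = 1 := inv_mul_cancel₀ hc0.ne'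
  rw [sinh_log hc0]
  nlinarith [mul_le_mul_of_nonneg_left hlog hc0.le, inv_pos.2 hc0]

lemma half_add_sq_div_four_lt_sinh {u : ℝ} (hu : 0 < u) : u / 2 + u ^ 2 / 4 < sinh u := by
  have hexp : 1 + u + u ^ 2 / 2 ≤ exp u := quadratic_le_exp_of_nonneg hu.le
  have hexp_neg : exp (-u) < 1 := exp_lt_one_iff.2 (neg_neg_of_pos hu)
  rw [sinh_eq]
  linarith

theorem exists_pos_sinh_eq_mul_self {c : ℝ} (hc : 1 < c) : ∃ u, 0 < u ∧ sinh u = c * u := by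
  let f : ℝ → ℝ := fun u => sinh u - c * u
  have hlog_pos : 0 < log c := log_pos hc
  have hlog_le : log c ≤ 4 * c := by linarith [log_le_sub_one_of_pos (by linarith : 0 < c)]
  have hf_left : f (log c) ≤ 0 := by linarith [sinh_log_lt_mul_log hc]
  have hf_right : 0 ≤ f (4 * c) := by
    nlinarith [half_add_sq_div_four_lt_sinh (by linarith : 0 < 4 * c)]
  obtain ⟨u, hu, hfu⟩ : ∃ u ∈ Set.Icc (log c) (4 * c), f u = 0 :=
    intermediate_value_Icc hlog_le (by fun_prop) ⟨hf_left, hf_right⟩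
  exact ⟨u, hlog_pos.trans_le hu.1, sub_eq_zero.1 hfu⟩

theorem smp_continuous_grr_solution_exists (j : ℝ) (hj : 0 < j) :
    ∃ ϱ ∈ Set.Ioo (0:ℝ) 1,
      (1 / ϱ - ϱ) / 2 = Real.exp (j / 2) * Real.log (1 / ϱ) := by
  obtain ⟨u, hu, hsinh⟩ := exists_pos_sinh_eq_mul_self (one_lt_exp_iff.2 (half_pos hj))
  refine ⟨exp (-u), ⟨exp_pos _, exp_lt_one_iff.2 (neg_neg_of_pos hu)⟩, ?_⟩
  rw [one_div, ← exp_neg, neg_neg, log_exp, ← hsinh, sinh_eq]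
end

section
/- Let C ≠ 0 be real and Φ∞ > 0 with C·Φ∞ = arcsinh(C·e^{-c₀}) for a real constant c₀. Then the function φ₂(x) defined by e^{φ₂(x)} = C / sinh(C(Φ∞ - Φ(x))), where Φ is continuously differentiable with Φ' = e^{-φ̄}, satisfies the ODE (φ₂' e^{φ̄})' = e^{2φ₂ - φ̄} on any interval where Φ(x) < Φ∞ and sinh(C(Φ∞ - Φ(x))) has the same sign as C. -/
theorem phi2_field_equation_C_ne_zero
    (φbar : ℝ → ℝ) (hφbar : ContDiff ℝ (⊤ : ℕ∞) φbar)
    (Φ : ℝ → ℝ) (hΦ : ∀ x, HasDerivAt Φ (Real.exp (-φbar x)) x)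
    (C c₀ Φinf : ℝ) (hC : C ≠ 0) (hΦinf : 0 < Φinf)
    (hbc : C * Φinf = Real.arsinh (C * Real.exp (-c₀)))
    (φ₂ : ℝ → ℝ)
    (hφ₂ : ∀ x, φ₂ x = Real.log (C / Real.sinh (C * (Φinf - Φ x))))
    (s : Set ℝ) (hs : IsOpen s)
    (hdom : ∀ x ∈ s, Φ x < Φinf ∧ 0 < C * Real.sinh (C * (Φinf - Φ x))) :
    ∀ x ∈ s, HasDerivAt (fun y => deriv φ₂ y * Real.exp (φbar y))
      (Real.exp (2 * φ₂ x - φbar x)) x := by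
  intro x hx
  set u : ℝ → ℝ := fun y => C * (Φinf - Φ y) with hu
  have hsinh_ne : ∀ y ∈ s, Real.sinh (u y) ≠ 0 := by
    intro y hy h
    have h2 := (hdom y hy).2
    rw [show C * (Φinf - Φ y) = u y from rfl, h, mul_zero] at h2
    exact lt_irrefl _ h2
  have hpos : ∀ y ∈ s, 0 < C / Real.sinh (u y) := by
    intro y hy
    have h := (hdom y hy).2
    have hne := hsinh_ne y hy
    rcases lt_or_gt_of_ne hne with h1 | h1
    · have hCneg : C < 0 := by nlinarith
      exact div_pos_of_neg_of_neg hCneg h1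
    · have hCpos : 0 < C := by nlinarith
      exact div_pos hCpos h1
  have hu' : ∀ y, HasDerivAt u (-(C * Real.exp (-φbar y))) y := by
    intro y
    have := ((hΦ y).const_sub Φinf).const_mul C
    convert this using 1
    · rfl
    · rfl
    ring
  have hsinhD : ∀ y, HasDerivAt (fun z => Real.sinh (u z))
      (Real.cosh (u y) * -(C * Real.exp (-φbar y))) y := by
    intro y
    exact (Real.hasDerivAt_sinh (u y)).comp y (hu' y)
  have hcoshD : ∀ y, HasDerivAt (fun z => Real.cosh (u z))
      (Real.sinh (u y) * -(C * Real.exp (-φbar y))) y := by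
    intro y
    exact (Real.hasDerivAt_cosh (u y)).comp y (hu' y)
  have hφ₂eq : φ₂ = fun y => Real.log (C / Real.sinh (u y)) := funext hφ₂
  have hderivφ₂ : ∀ y ∈ s, HasDerivAt φ₂
      (C * Real.cosh (u y) / Real.sinh (u y) * Real.exp (-φbar y)) y := by
    intro y hy
    have hne := hsinh_ne y hy
    have hfne : C / Real.sinh (u y) ≠ 0 := ne_of_gt (hpos y hy)
    have hdiv : HasDerivAt (fun z => C / Real.sinh (u z))
        ((0 * Real.sinh (u y) - C * (Real.cosh (u y) * -(C * Real.exp (-φbar y)))) /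
          Real.sinh (u y) ^ 2) y :=
      (hasDerivAt_const y C).div (hsinhD y) hne
    have hlog := hdiv.log hfne
    rw [hφ₂eq]
    convert hlog using 1
    field_simp
    ring
  have hmem : s ∈ nhds x := hs.mem_nhds hx
  have heq : (fun y => deriv φ₂ y * Real.exp (φbar y)) =ᶠ[nhds x]
      (fun y => C * Real.cosh (u y) / Real.sinh (u y)) := by
    filter_upwards [hmem] with y hy
    rw [(hderivφ₂ y hy).deriv, mul_assoc, ← Real.exp_add, neg_add_cancel,
      Real.exp_zero, mul_one]
  have hg : HasDerivAt (fun y => C * Real.cosh (u y) / Real.sinh (u y))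
      (Real.exp (2 * φ₂ x - φbar x)) x := by
    have hne := hsinh_ne x hx
    have hdiv := ((hcoshD x).const_mul C).div (hsinhD x) hne
    convert hdiv using 1
    · rfl
    · rfl
    · rfl
    have hexp : Real.exp (φ₂ x) = C / Real.sinh (u x) := by
      rw [hφ₂ x]; exact Real.exp_log (hpos x hx)
    have h2 : Real.exp (2 * φ₂ x - φbar x)
        = (C / Real.sinh (u x)) ^ 2 * Real.exp (-φbar x) := by
      rw [show 2 * φ₂ x - φbar x = φ₂ x + φ₂ x + -φbar x by ring,
        Real.exp_add, Real.exp_add, hexp]; ring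
    rw [h2]
    have hid : Real.cosh (u x) ^ 2 = 1 + Real.sinh (u x) ^ 2 := by
      have := Real.cosh_sq_sub_sinh_sq (u x); nlinarith
    field_simp
    linear_combination (-1 : ℝ) * hid
  exact hg.congr_of_eventuallyEq heq
end

section
/- Let φ̄ be smooth with Φ(x) = ∫₀ˣ e^{-φ̄} and let Φ∞ > 0. The function φ₂(x) = -ln(Φ∞ - Φ(x)), defined for Φ(x) < Φ∞, satisfies (φ₂' e^{φ̄})' = e^{2φ₂ - φ̄}, and moreover its first integral satisfies (φ₂' e^{φ̄})² - e^{2φ₂} = 0. -/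
theorem phi2_field_equation_C_zero
    (φbar : ℝ → ℝ) (hφbar : ContDiff ℝ (⊤ : ℕ∞) φbar)
    (Φ : ℝ → ℝ) (hΦ : ∀ x, HasDerivAt Φ (Real.exp (-φbar x)) x)
    (Φinf : ℝ) (hΦinf : 0 < Φinf)
    (φ₂ : ℝ → ℝ)
    (hφ₂ : ∀ x, φ₂ x = -Real.log (Φinf - Φ x)) :
    ∀ x, Φ x < Φinf →
      (HasDerivAt (fun y => deriv φ₂ y * Real.exp (φbar y))
        (Real.exp (2 * φ₂ x - φbar x)) x ∧
      (deriv φ₂ x * Real.exp (φbar x))^2 - Real.exp (2 * φ₂ x) = 0) := by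
  -- derivative of φ₂ at any point where Φ y < Φinf
  have hu : ∀ y, HasDerivAt (fun z => Φinf - Φ z) (-(Real.exp (-φbar y))) y := by
    intro y
    simpa using (hΦ y).const_sub Φinf
  have hder : ∀ y, Φ y < Φinf →
      HasDerivAt φ₂ (Real.exp (-φbar y) / (Φinf - Φ y)) y := by
    intro y hy
    have hne : Φinf - Φ y ≠ 0 := by linarith
    have h1 : HasDerivAt (fun z => -Real.log (Φinf - Φ z))
        (-(-(Real.exp (-φbar y)) / (Φinf - Φ y))) y := ((hu y).log hne).neg
    have h2 : φ₂ = fun z => -Real.log (Φinf - Φ z) := funext hφ₂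
    rw [h2]
    convert h1 using 1
    field_simp
  have hderiv : ∀ y, Φ y < Φinf →
      deriv φ₂ y = Real.exp (-φbar y) / (Φinf - Φ y) := fun y hy =>
    (hder y hy).deriv
  intro x hx
  have hne : Φinf - Φ x ≠ 0 := by linarith
  have hpos : 0 < Φinf - Φ x := by linarith
  -- exp (φ₂ x) = (Φinf - Φ x)⁻¹
  have hexp : Real.exp (φ₂ x) = (Φinf - Φ x)⁻¹ := by
    rw [hφ₂ x, Real.exp_neg, Real.exp_log hpos]
  -- the open set where Φ < Φinf
  have hopen : IsOpen {y | Φ y < Φinf} :=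
    isOpen_lt (continuous_iff_continuousAt.2 fun y => (hΦ y).continuousAt)
      continuous_const
  have hmem : {y | Φ y < Φinf} ∈ nhds x := hopen.mem_nhds hx
  have heq : (fun y => deriv φ₂ y * Real.exp (φbar y)) =ᶠ[nhds x]
      (fun y => (Φinf - Φ y)⁻¹) := by
    filter_upwards [hmem] with y hy
    rw [hderiv y hy]
    rw [Real.exp_neg]
    have hyne : Φinf - Φ y ≠ 0 := by linarith
    field_simp
  have hinv : HasDerivAt (fun y => (Φinf - Φ y)⁻¹)
      (-(-(Real.exp (-φbar x))) / (Φinf - Φ x) ^ 2) x := (hu x).inv hne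
  constructor
  · have : HasDerivAt (fun y => deriv φ₂ y * Real.exp (φbar y))
        (-(-(Real.exp (-φbar x))) / (Φinf - Φ x) ^ 2) x :=
      hinv.congr_of_eventuallyEq heq
    convert this using 1
    have : (2 : ℝ) * φ₂ x - φbar x = φ₂ x + φ₂ x + -φbar x := by ring
    rw [this, Real.exp_add, Real.exp_add, hexp]
    field_simp
  · rw [hderiv x hx, Real.exp_neg]
    have h2 : Real.exp (2 * φ₂ x) = ((Φinf - Φ x)⁻¹) ^ 2 := by
      rw [two_mul, Real.exp_add, hexp]; ring
    rw [h2]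
    field_simp
    ring
end

section
/- For any smooth φ̄ and any solution φ₂ of the ODE (φ₂' e^{φ̄})' = e^{2φ₂ - φ̄} on an interval, the quantity I₂ = (φ₂' e^{φ̄})² - e^{2φ₂} is constant on that interval. -/
theorem first_integral_constant
    (φbar : ℝ → ℝ) (hφbar : ContDiff ℝ (⊤ : ℕ∞) φbar)
    (a b : ℝ) (φ₂ : ℝ → ℝ)
    (hdiff : ∀ x ∈ Set.Ioo a b, HasDerivAt φ₂ (deriv φ₂ x) x)
    (hode : ∀ x ∈ Set.Ioo a b,
      HasDerivAt (fun y => deriv φ₂ y * Real.exp (φbar y))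
        (Real.exp (2 * φ₂ x - φbar x)) x) :
    ∀ x ∈ Set.Ioo a b, ∀ y ∈ Set.Ioo a b,
      (deriv φ₂ x * Real.exp (φbar x))^2 - Real.exp (2 * φ₂ x) =
      (deriv φ₂ y * Real.exp (φbar y))^2 - Real.exp (2 * φ₂ y) := by
  intro x hx y hy
  set I : ℝ → ℝ := fun z => (deriv φ₂ z * Real.exp (φbar z))^2 - Real.exp (2 * φ₂ z)
  have key : ∀ z ∈ Set.Ioo a b, HasDerivWithinAt I 0 (Set.Ioo a b) z := by
    intro z hz
    have h1 : HasDerivAt (fun w => (deriv φ₂ w * Real.exp (φbar w))^2)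
        (2 * (deriv φ₂ z * Real.exp (φbar z)) * Real.exp (2 * φ₂ z - φbar z)) z := by
      simpa [mul_comm] using (hode z hz).fun_pow 2
    have h2 : HasDerivAt (fun w => Real.exp (2 * φ₂ w))
        (2 * deriv φ₂ z * Real.exp (2 * φ₂ z)) z := by
      have := (((hdiff z hz).const_mul 2).exp)
      simpa [mul_comm] using this
    have h3 := h1.sub h2
    have heq : 2 * (deriv φ₂ z * Real.exp (φbar z)) * Real.exp (2 * φ₂ z - φbar z)
        - 2 * deriv φ₂ z * Real.exp (2 * φ₂ z) = 0 := by
      rw [Real.exp_sub]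
      field_simp
      ring
    rw [heq] at h3
    exact h3.hasDerivWithinAt
  have hsub : ‖I x - I y‖ ≤ 0 * ‖x - y‖ := by
    apply (convex_Ioo a b).norm_image_sub_le_of_norm_hasDerivWithin_le key
      (fun z hz => by simp) hy hx
  have : ‖I x - I y‖ ≤ 0 := by simpa using hsub
  have := norm_sub_eq_zero_iff.mp (le_antisymm this (norm_nonneg _))
  simpa [I] using this
end
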